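/- Let A, B, C be positive semi-definite n×n matrices with A ≥ C and B ≥ C (in the Loewner order). Then for any real numbers 0 ≤ t₁ ≤ t₂, det(Id + t₁A) · det(Id + t₂B) ≥ det(Id + t₂C) · det(Id + t₁(A + B − C)). -/

import Mathlib

/-!
Write `P = R * R` with `R = √P`. The matrix determinant lemma gives
`det (K + P) = det K * det (1 + R * K⁻¹ * R)`, and inversion reverses the Loewner order, so for
`0 < N ≤ M` and `0 ≤ P` we get `det (M + P) * det N ≤ det (N + P) * det M`.
For `t₁ > 0` the theorem is this inequality for `M = t₂ (1 + t₁ A)`, `N = t₁ (1 + t₂ C)` and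
`P = t₁ t₂ (B - C)`, multiplied by `(t₁ t₂)ⁿ`; for `t₁ = 0` it is the monotonicity of `det` on
positive definite matrices.
-/

open Matrix
open scoped MatrixOrder ComplexOrder

namespace Matrix

variable {ι 𝕜 : Type*} [RCLike 𝕜]

lemma PosDef.of_le {M N : Matrix ι ι 𝕜} (hN : N.PosDef) (h : N ≤ M) : M.PosDef := by
  simpa using hN.add_posSemidef (le_iff.mp h)

variable [Fintype ι] [DecidableEq ι]

lemma inv_le_inv_of_le {M N : Matrix ι ι 𝕜} (hN : N.PosDef) (h : N ≤ M) : M⁻¹ ≤ N⁻¹ := by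
  have hM := hN.of_le h
  let := hM.isUnit.invertible
  let := hN.inv.isUnit.invertible
  -- The two Schur complements of this block matrix are `M - N` and `N⁻¹ - M⁻¹`.
  have hblock : (fromBlocks M 1 1ᴴ N⁻¹).PosSemidef := by
    rw [PosDef.fromBlocks₂₂ _ _ hN.inv]
    simpa [nonsing_inv_nonsing_inv _ ((isUnit_iff_isUnit_det _).mp hN.isUnit)] using le_iff.mp h
  rw [le_iff]
  simpa using (PosDef.fromBlocks₁₁ _ _ hM).mp hblock

lemma det_add_eq_det_mul_det_one_add_sqrt_mul_inv_mul_sqrt {K P : Matrix ι ι 𝕜}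
    (hK : IsUnit K.det) (hP : 0 ≤ P) :
    (K + P).det = K.det * (1 + CFC.sqrt P * K⁻¹ * CFC.sqrt P).det := by
  conv_lhs => rw [← CFC.sqrt_mul_sqrt_self P hP]
  exact det_add_mul _ _ hK

lemma one_le_one_add_sqrt_mul_inv_mul_sqrt {K : Matrix ι ι 𝕜} (hK : K.PosDef)
    (P : Matrix ι ι 𝕜) : 1 ≤ 1 + CFC.sqrt P * K⁻¹ * CFC.sqrt P :=
  le_add_of_nonneg_right <|
    (CFC.sqrt_nonneg P).isSelfAdjoint.conjugate_nonneg hK.inv.posSemidef.nonneg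

lemma one_le_det_of_one_le {A : Matrix ι ι ℝ} (h : 1 ≤ A) : 1 ≤ A.det := by
  have hA : A.IsHermitian := by simpa using (le_iff.mp h).isHermitian.add isHermitian_one
  have heig (i : ι) : 1 ≤ hA.eigenvalues i :=
    (algebraMap_le_iff_le_spectrum (r := (1 : ℝ)) hA.isSelfAdjoint).mp (by simpa using h) _
      (hA.eigenvalues_mem_spectrum_real i)
  rw [hA.det_eq_prod_eigenvalues]
  exact Finset.one_le_prod fun i _ => by simpa using heig i

lemma det_le_det_of_le {M N : Matrix ι ι ℝ} (hN : N.PosDef) (h : N ≤ M) : N.det ≤ M.det := by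
  have hdet := hN.det_pos
  calc N.det = N.det * 1 := (mul_one _).symm
    _ ≤ N.det * (1 + CFC.sqrt (M - N) * N⁻¹ * CFC.sqrt (M - N)).det :=
        mul_le_mul_of_nonneg_left
          (one_le_det_of_one_le (one_le_one_add_sqrt_mul_inv_mul_sqrt hN _)) hdet.le
    _ = M.det := by
        rw [← det_add_eq_det_mul_det_one_add_sqrt_mul_inv_mul_sqrt hdet.ne'.isUnit
          (sub_nonneg.mpr h), add_sub_cancel]

lemma det_add_mul_det_le_det_add_mul_det {M N P : Matrix ι ι ℝ} (hN : N.PosDef) (hNM : N ≤ M)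
    (hP : 0 ≤ P) : (M + P).det * N.det ≤ (N + P).det * M.det := by
  have hM := hN.of_le hNM
  set R := CFC.sqrt P
  have hconj : 1 + R * M⁻¹ * R ≤ 1 + R * N⁻¹ * R := by
    gcongr
    exact (CFC.sqrt_nonneg P).isSelfAdjoint.conjugate_le_conjugate (inv_le_inv_of_le hN hNM)
  have hdet := det_le_det_of_le (PosDef.one.of_le (one_le_one_add_sqrt_mul_inv_mul_sqrt hM P))
    hconj
  rw [det_add_eq_det_mul_det_one_add_sqrt_mul_inv_mul_sqrt hM.det_pos.ne'.isUnit hP,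
    det_add_eq_det_mul_det_one_add_sqrt_mul_inv_mul_sqrt hN.det_pos.ne'.isUnit hP]
  calc M.det * (1 + R * M⁻¹ * R).det * N.det = M.det * N.det * (1 + R * M⁻¹ * R).det := by ring
    _ ≤ M.det * N.det * (1 + R * N⁻¹ * R).det := by
        gcongr
        exact (mul_pos hM.det_pos hN.det_pos).le
    _ = N.det * (1 + R * N⁻¹ * R).det * M.det := by ring

end Matrix

theorem det_ineq_two_times_general {n : ℕ} (A B C : Matrix (Fin n) (Fin n) ℝ)
    (hC : C.PosSemidef)
    (hAC : (A - C).PosSemidef) (hBC : (B - C).PosSemidef)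
    (t₁ t₂ : ℝ) (ht₁ : 0 ≤ t₁) (ht₁₂ : t₁ ≤ t₂) :
    (1 + t₂ • C).det * (1 + t₁ • (A + B - C)).det ≤
      (1 + t₁ • A).det * (1 + t₂ • B).det := by
  have ht₂ : 0 ≤ t₂ := ht₁.trans ht₁₂
  have hCt₂ : (1 + t₂ • C).PosDef := PosDef.one.add_posSemidef (hC.smul ht₂)
  rcases ht₁.eq_or_lt with rfl | ht₁pos
  · have hCB : 1 + t₂ • C ≤ 1 + t₂ • B := by
      rw [le_iff, add_sub_add_left_eq_sub, ← smul_sub]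
      exact hBC.smul ht₂
    simpa using det_le_det_of_le hCt₂ hCB
  have hNM : t₁ • (1 + t₂ • C) ≤ t₂ • (1 + t₁ • A) := by
    rw [le_iff, show t₂ • (1 + t₁ • A) - t₁ • (1 + t₂ • C) =
      (t₂ - t₁) • (1 : Matrix (Fin n) (Fin n) ℝ) + (t₁ * t₂) • (A - C) by module]
    exact (PosSemidef.one.smul (sub_nonneg.mpr ht₁₂)).add (hAC.smul (mul_nonneg ht₁ ht₂))
  have key := det_add_mul_det_le_det_add_mul_det (hCt₂.smul ht₁pos) hNM
    (hBC.smul (mul_nonneg ht₁ ht₂)).nonneg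
  rw [show t₂ • (1 + t₁ • A) + (t₁ * t₂) • (B - C) = t₂ • (1 + t₁ • (A + B - C)) by module,
    show t₁ • (1 + t₂ • C) + (t₁ * t₂) • (B - C) = t₁ • (1 + t₂ • B) by module] at key
  simp only [det_smul, Fintype.card_fin] at key
  have hpos : 0 < t₁ ^ n * t₂ ^ n := mul_pos (pow_pos ht₁pos n) (pow_pos (ht₁pos.trans_le ht₁₂) n)
  exact le_of_mul_le_mul_left (by linarith) hpos

/-- If `A ≥ C`, `B ≥ C` are positive semi-definite and `0 ≤ t₁ ≤ t₂`, then
`det (Id + t₂ C) * det (Id + t₁ (A + B - C)) ≤ det (Id + t₁ A) * det (Id + t₂ B)`. -/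
theorem det_ineq_two_times {n : ℕ} (A B C : Matrix (Fin n) (Fin n) ℝ)
    (hA : A.PosSemidef) (hB : B.PosSemidef) (hC : C.PosSemidef)
    (hAC : (A - C).PosSemidef) (hBC : (B - C).PosSemidef)
    (t₁ t₂ : ℝ) (ht₁ : 0 ≤ t₁) (ht₁₂ : t₁ ≤ t₂) :
    (1 + t₂ • C).det * (1 + t₁ • (A + B - C)).det ≤
      (1 + t₁ • A).det * (1 + t₂ • B).det :=
  det_ineq_two_times_general A B C hC hAC hBC t₁ t₂ ht₁ ht₁₂
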